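/- With M = var[U(S)]⁻¹ cov[U(S), X_S], one has Mᵀ U(s) = μ_s − μ̄ for every s ∈ {1,…,S̄}; consequently the SEO forecast Ŷ_SEO(x,s) = α_F + β_Fᵀ(x − Mᵀ U(s)) equals α_F + β_Fᵀ(x − μ_s + μ̄), and Ŷ_SEO(X_S, S) is the linear projection of Y_S onto the span of a constant and X_S − μ_S. -/

import Mathlib

open MeasureTheory Matrix Finset

/-!
The centered dummies and the constant span all functions of the label `s`, so the regression of
the label means on `U(s)` fits exactly: with `N` the matrix of contrasts `μ_i - μ_last`,
`Nᵀ U(s) = μ_s - μ̄` for every `s`. Hence `cov[U(S), X_S] = cov[U(S), μ_S] = var[U(S)] N`, and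
`M = N` because `var[U(S)]` is nonsingular.

For the projection, the residual `R = E[Y] + β_Fᵀ(X - μ_S) - Y` has mean zero, and on the fiber
`{S = s}` its covariance with `X - μ_s` is `p_s Σ_s (β_F - β_s)`; summed over `s` this vanishes by
the definition of `β_F`. So `R` is orthogonal to constants and to `X - μ_S`, and Pythagoras shows
that no other `a + bᵀ(X - μ_S)` has smaller mean squared error.
-/

section CenteredDummies

variable {n d : ℕ} (p : Fin (n + 1) → ℝ)

def centeredDummies (s : Fin (n + 1)) : Fin n → ℝ :=
  fun i => (if s = i.castSucc then 1 else 0) - p i.castSucc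

def dummyGram : Matrix (Fin n) (Fin n) ℝ :=
  ∑ s, p s • vecMulVec (centeredDummies p s) (centeredDummies p s)

def lastContrasts (μ : Fin (n + 1) → Fin d → ℝ) : Matrix (Fin n) (Fin d) ℝ :=
  of fun i j => μ i.castSucc j - μ (Fin.last n) j

variable {p}

lemma centeredDummies_castSucc_sub_last (i : Fin n) :
    centeredDummies p i.castSucc - centeredDummies p (Fin.last n) = Pi.single i 1 := by
  ext k
  simp [centeredDummies, Pi.single_apply, (Fin.castSucc_lt_last k).ne', eq_comm]

lemma sum_smul_centeredDummies (hp1 : ∑ s, p s = 1) :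
    ∑ s, p s • centeredDummies p s = 0 := by
  ext i
  simp [centeredDummies, Finset.sum_apply, mul_sub, ← Finset.sum_mul, hp1]

lemma lastContrasts_transpose_mulVec (hp1 : ∑ s, p s = 1) (μ : Fin (n + 1) → Fin d → ℝ)
    (s : Fin (n + 1)) :
    (lastContrasts μ)ᵀ *ᵥ centeredDummies p s = μ s - ∑ t, p t • μ t := by
  set ν : Fin (n + 1) → Fin d → ℝ := fun t => μ t - μ (Fin.last n)
  have hν : ∀ t, (lastContrasts μ)ᵀ *ᵥ centeredDummies p t
      = ∑ u, ((if t = u then 1 else 0) - p u) • ν u := by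
    intro t
    rw [Fin.sum_univ_castSucc]
    ext j
    simp [ν, lastContrasts, mulVec, dotProduct, centeredDummies, Finset.sum_apply, mul_comm]
  rw [hν]
  simp only [sub_smul, ite_smul, one_smul, zero_smul, Finset.sum_sub_distrib,
    Finset.sum_ite_eq, Finset.mem_univ, if_true]
  ext j
  simp [ν, Finset.sum_apply, mul_sub, ← Finset.sum_mul, hp1]

lemma dummyGram_mul_lastContrasts (hp1 : ∑ s, p s = 1) (μ : Fin (n + 1) → Fin d → ℝ) :
    dummyGram p * lastContrasts μ = ∑ s, p s • vecMulVec (centeredDummies p s) (μ s) := by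
  have hmean : ∑ s, p s • vecMulVec (centeredDummies p s) (∑ t, p t • μ t) = 0 := by
    ext i j
    have := congrFun (sum_smul_centeredDummies hp1) i
    simp only [Finset.sum_apply, Pi.smul_apply, smul_eq_mul, Pi.zero_apply] at this
    simp [Matrix.sum_apply, vecMulVec_apply, ← mul_assoc, ← Finset.sum_mul, this]
  calc dummyGram p * lastContrasts μ
      = ∑ s, p s • vecMulVec (centeredDummies p s) (μ s - ∑ t, p t • μ t) := by
        rw [dummyGram, Matrix.sum_mul]
        refine Finset.sum_congr rfl fun s _ => ?_
        rw [Matrix.smul_mul, vecMulVec_mul, ← mulVec_transpose, lastContrasts_transpose_mulVec hp1]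
    _ = ∑ s, p s • vecMulVec (centeredDummies p s) (μ s) := by
        simp only [vecMulVec_sub, smul_sub, Finset.sum_sub_distrib, hmean, sub_zero]

/-- `x ⬝ dummyGram p x = ∑ₛ p s (U(s) ⬝ x)²`, and `U(i) - U(last)` is the `i`-th basis vector. -/
lemma isUnit_dummyGram (hp : ∀ s, 0 < p s) : IsUnit (dummyGram p) := by
  rw [← mulVec_injective_iff_isUnit, ← Matrix.coe_mulVecLin, ← LinearMap.ker_eq_bot,
    LinearMap.ker_eq_bot']
  intro x hx
  replace hx : dummyGram p *ᵥ x = 0 := hx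
  have hquad : ∑ s, p s * (centeredDummies p s ⬝ᵥ x) ^ 2 = 0 := by
    have : x ⬝ᵥ dummyGram p *ᵥ x = 0 := by simp [hx]
    rw [← this, dummyGram, Matrix.sum_mulVec, dotProduct_sum]
    refine Finset.sum_congr rfl fun s _ => ?_
    rw [Matrix.smul_mulVec, dotProduct_smul, dotProduct_mulVec, vecMul_vecMulVec, smul_dotProduct,
      dotProduct_comm x, smul_eq_mul, smul_eq_mul, sq]
  have horth : ∀ s, centeredDummies p s ⬝ᵥ x = 0 := fun s => by
    have := (Finset.sum_eq_zero_iff_of_nonneg fun t _ =>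
      mul_nonneg (hp t).le (sq_nonneg _)).1 hquad s (mem_univ s)
    simpa [(hp s).ne'] using this
  ext i
  have := congrArg₂ (· - ·) (horth i.castSucc) (horth (Fin.last n))
  simpa [← sub_dotProduct, centeredDummies_castSucc_sub_last] using this

lemma inv_dummyGram_mul (hp : ∀ s, 0 < p s) (hp1 : ∑ s, p s = 1)
    (μ : Fin (n + 1) → Fin d → ℝ) :
    (dummyGram p)⁻¹ * ∑ s, p s • vecMulVec (centeredDummies p s) (μ s) = lastContrasts μ := by
  rw [← dummyGram_mul_lastContrasts hp1, nonsing_inv_mul_cancel_left _ _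
    ((isUnit_iff_isUnit_det _).1 (isUnit_dummyGram hp))]

end CenteredDummies

section Fibers

variable {Ω ι : Type*} [MeasurableSpace Ω] {P : Measure Ω} [MeasurableSpace ι]
  [MeasurableSingletonClass ι] {S : Ω → ι}

lemma setIntegral_fiber_comp_mul (hS : Measurable S) (g : ι → ℝ) (h : Ω → ℝ) (s : ι) :
    ∫ ω in {ω | S ω = s}, g (S ω) * h ω ∂P = g s * ∫ ω in {ω | S ω = s}, h ω ∂P := by
  rw [← integral_const_mul]
  exact setIntegral_congr_fun (hS (measurableSet_singleton s)) fun ω (hω : S ω = s) => by rw [hω]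

variable [Fintype ι]

lemma integral_eq_sum_setIntegral_fiber (hS : Measurable S) {f : Ω → ℝ} (hf : Integrable f P) :
    ∫ ω, f ω ∂P = ∑ s, ∫ ω in {ω | S ω = s}, f ω ∂P := by
  have hcover : ⋃ s, {ω | S ω = s} = Set.univ := Set.iUnion_eq_univ_iff.2 fun ω => ⟨S ω, rfl⟩
  rw [← integral_iUnion_fintype (s := fun s => {ω | S ω = s})
    (fun s => hS (measurableSet_singleton s))
    (fun s t hst => Set.disjoint_left.2 fun ω (h₁ : S ω = s) (h₂ : S ω = t) => hst (h₁ ▸ h₂))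
    (fun s => hf.integrableOn), hcover, setIntegral_univ]

lemma memLp_comp_of_finite [IsFiniteMeasure P] (hS : Measurable S) (g : ι → ℝ) (q : ENNReal) :
    MemLp (fun ω => g (S ω)) q P :=
  MemLp.of_bound (Measurable.of_discrete.comp hS).aestronglyMeasurable (∑ s, ‖g s‖)
    (Filter.Eventually.of_forall fun ω => single_le_sum (f := fun s => ‖g s‖)
        (fun _ _ => norm_nonneg _) (mem_univ (S ω)))

lemma integral_comp_mul_eq_sum [IsFiniteMeasure P] (hS : Measurable S) (g : ι → ℝ) {h : Ω → ℝ}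
    (hh : Integrable h P) :
    ∫ ω, g (S ω) * h ω ∂P = ∑ s, g s * ∫ ω in {ω | S ω = s}, h ω ∂P := by
  have hg : Integrable (fun ω => g (S ω) * h ω) P :=
    hh.mul_of_top_right (memLp_comp_of_finite hS g ⊤)
  rw [integral_eq_sum_setIntegral_fiber hS hg]
  exact Finset.sum_congr rfl fun s _ => setIntegral_fiber_comp_mul hS g h s

lemma integral_comp_eq_sum [IsFiniteMeasure P] (hS : Measurable S) (g : ι → ℝ) :
    ∫ ω, g (S ω) ∂P = ∑ s, g s * P.real {ω | S ω = s} := by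
  simpa using integral_comp_mul_eq_sum hS g (integrable_const (1 : ℝ))

end Fibers

section LeastSquares

variable {Ω : Type*} [MeasurableSpace Ω] {ν : Measure Ω} {d : ℕ}

lemma memLp_two_of_integrable_sq_of_integrable_add_one_sq [IsFiniteMeasure ν] {f : Ω → ℝ}
    (hf : Integrable (fun ω => f ω ^ 2) ν) (hf1 : Integrable (fun ω => (f ω + 1) ^ 2) ν) :
    MemLp f 2 ν := by
  refine (memLp_two_iff_integrable_sq ?_).2 hf
  have : f = fun ω => 2⁻¹ * ((f ω + 1) ^ 2 - f ω ^ 2 - 1) := by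
    funext ω; ring
  rw [this]
  exact ((hf1.sub hf).aestronglyMeasurable.sub aestronglyMeasurable_const).const_mul _

lemma memLp_dotProduct {q : ENNReal} {Z : Ω → Fin d → ℝ} (hZ : ∀ i, MemLp (fun ω => Z ω i) q ν)
    (v : Fin d → ℝ) : MemLp (fun ω => v ⬝ᵥ Z ω) q ν := by
  simpa only [dotProduct] using memLp_finsetSum univ fun i _ => (hZ i).const_mul (v i)

lemma integral_mul_affine [IsFiniteMeasure ν] {R : Ω → ℝ} {Z : Ω → Fin d → ℝ} (hR : MemLp R 2 ν)
    (hZ : ∀ i, MemLp (fun ω => Z ω i) 2 ν) (c : ℝ) (v : Fin d → ℝ) :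
    ∫ ω, R ω * (c + v ⬝ᵥ Z ω) ∂ν = c * ∫ ω, R ω ∂ν + ∑ i, v i * ∫ ω, R ω * Z ω i ∂ν := by
  have hRZ : ∀ i, Integrable (fun ω => v i * (R ω * Z ω i)) ν := fun i =>
    (hR.integrable_mul (hZ i)).const_mul (v i)
  have hpt : ∀ ω, R ω * (c + v ⬝ᵥ Z ω) = c * R ω + ∑ i, v i * (R ω * Z ω i) := fun ω => by
    simp only [dotProduct, mul_add, Finset.mul_sum]
    congr 1
    · ring
    · exact Finset.sum_congr rfl fun i _ => by ring
  simp only [hpt]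
  rw [integral_add ((hR.integrable one_le_two).const_mul c)
      (integrable_finsetSum _ fun i _ => hRZ i),
    integral_finsetSum _ fun i _ => hRZ i]
  simp only [integral_const_mul]

lemma integral_sq_le_integral_add_sq {R G : Ω → ℝ} (hR : MemLp R 2 ν) (hG : MemLp G 2 ν)
    (horth : ∫ ω, R ω * G ω ∂ν = 0) :
    ∫ ω, R ω ^ 2 ∂ν ≤ ∫ ω, (R ω + G ω) ^ 2 ∂ν := by
  have hRG : Integrable (fun ω => 2 * (R ω * G ω)) ν := (hR.integrable_mul hG).const_mul 2
  have hpt : ∀ ω, (R ω + G ω) ^ 2 = R ω ^ 2 + (2 * (R ω * G ω) + G ω ^ 2) := fun ω => by ring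
  simp only [hpt]
  have hrest : Integrable (fun ω => 2 * (R ω * G ω) + G ω ^ 2) ν := hRG.add hG.integrable_sq
  rw [integral_add hR.integrable_sq hrest,
    integral_add hRG hG.integrable_sq, integral_const_mul, horth]
  have hG2 : 0 ≤ ∫ ω, G ω ^ 2 ∂ν := integral_nonneg fun ω => sq_nonneg (G ω)
  linarith

lemma integral_affine_sub_mul_eq [IsFiniteMeasure ν] {W : Ω → Fin d → ℝ} {e : Ω → ℝ} {q : ℝ}
    {C : Matrix (Fin d) (Fin d) ℝ} (hW : ∀ i, MemLp (fun ω => W ω i) 2 ν) (he : MemLp e 2 ν)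
    (hmean : ∀ i, ∫ ω, W ω i ∂ν = 0) (hcov : ∀ i j, ∫ ω, W ω i * W ω j ∂ν = q * C i j)
    (horth : ∀ i, ∫ ω, W ω i * e ω ∂ν = 0) (c : ℝ) (v : Fin d → ℝ) (i : Fin d) :
    ∫ ω, (c + v ⬝ᵥ W ω - e ω) * W ω i ∂ν = q * (C *ᵥ v) i := by
  have hpt : ∀ ω, (c + v ⬝ᵥ W ω - e ω) * W ω i = W ω i * (c + v ⬝ᵥ W ω) - W ω i * e ω :=
    fun ω => by ring
  have hWv : Integrable (fun ω => W ω i * (c + v ⬝ᵥ W ω)) ν :=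
    (hW i).integrable_mul ((memLp_const c).add (memLp_dotProduct hW v))
  have hWe : Integrable (fun ω => W ω i * e ω) ν := (hW i).integrable_mul he
  simp only [hpt]
  rw [integral_sub hWv hWe, integral_mul_affine (hW i) hW, hmean, horth, mul_zero, zero_add,
    sub_zero, mulVec, dotProduct, Finset.mul_sum]
  exact Finset.sum_congr rfl fun j _ => by rw [hcov]; ring

lemma integral_sq_le_of_orthogonal [IsFiniteMeasure ν] {Y : Ω → ℝ} {Z : Ω → Fin d → ℝ}
    {c₀ : ℝ} {v₀ : Fin d → ℝ} (hY : MemLp Y 2 ν) (hZ : ∀ i, MemLp (fun ω => Z ω i) 2 ν)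
    (h0 : ∫ ω, (c₀ + v₀ ⬝ᵥ Z ω - Y ω) ∂ν = 0)
    (h1 : ∀ i, ∫ ω, (c₀ + v₀ ⬝ᵥ Z ω - Y ω) * Z ω i ∂ν = 0) (c : ℝ) (v : Fin d → ℝ) :
    ∫ ω, (c₀ + v₀ ⬝ᵥ Z ω - Y ω) ^ 2 ∂ν ≤ ∫ ω, (c + v ⬝ᵥ Z ω - Y ω) ^ 2 ∂ν := by
  have hR : MemLp (fun ω => c₀ + v₀ ⬝ᵥ Z ω - Y ω) 2 ν :=
    ((memLp_const c₀).add (memLp_dotProduct hZ v₀)).sub hY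
  have horth : ∫ ω, (c₀ + v₀ ⬝ᵥ Z ω - Y ω) * ((c - c₀) + (v - v₀) ⬝ᵥ Z ω) ∂ν = 0 := by
    rw [integral_mul_affine hR hZ, h0]
    simp only [h1, mul_zero, Finset.sum_const_zero, add_zero]
  have hpt : ∀ ω, c + v ⬝ᵥ Z ω - Y ω
      = (c₀ + v₀ ⬝ᵥ Z ω - Y ω) + ((c - c₀) + (v - v₀) ⬝ᵥ Z ω) := fun ω => by
    rw [sub_dotProduct]; ring
  have hG : MemLp (fun ω => (c - c₀) + (v - v₀) ⬝ᵥ Z ω) 2 ν :=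
    (memLp_const (c - c₀)).add (memLp_dotProduct hZ (v - v₀))
  simp only [hpt]
  exact integral_sq_le_integral_add_sq hR hG horth

end LeastSquares

lemma sum_smul_mulVec_sub_eq_zero {ι : Type*} [Fintype ι] [Nonempty ι] {d : ℕ} {p : ι → ℝ}
    {C : ι → Matrix (Fin d) (Fin d) ℝ} (hp : ∀ s, 0 < p s) (hC : ∀ s, (C s).PosDef)
    (β : ι → Fin d → ℝ) :
    ∑ s, p s • (C s *ᵥ ((∑ t, p t • C t)⁻¹ *ᵥ ∑ t, p t • (C t *ᵥ β t) - β s)) = 0 := by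
  have hA : (∑ t, p t • C t).PosDef :=
    posDef_sum univ_nonempty fun t _ => (hC t).smul (hp t)
  have hsum : ∀ x, ∑ t, p t • (C t *ᵥ x) = (∑ t, p t • C t) *ᵥ x := fun x => by
    simp only [Matrix.sum_mulVec, Matrix.smul_mulVec]
  simp only [mulVec_sub, smul_sub, Finset.sum_sub_distrib]
  rw [hsum, mulVec_mulVec, mul_nonsing_inv _ ((isUnit_iff_isUnit_det _).1 hA.isUnit),
    one_mulVec, sub_self]

section Model

variable {Ω : Type*} [MeasurableSpace Ω] {P : Measure Ω} {n d : ℕ} {S : Ω → Fin (n + 1)}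
  {p : Fin (n + 1) → ℝ} {X : Ω → Fin d → ℝ} {μv : Fin (n + 1) → Fin d → ℝ} {Y ε : Ω → ℝ}
  {αb : Fin (n + 1) → ℝ} {βb : Fin (n + 1) → Fin d → ℝ}
  {Sig : Fin (n + 1) → Matrix (Fin d) (Fin d) ℝ}

lemma integral_centeredDummies_comp [IsFiniteMeasure P] (hS : Measurable S)
    (hfib : ∀ s, P.real {ω | S ω = s} = p s) (hp1 : ∑ s, p s = 1) (i : Fin n) :
    ∫ ω, centeredDummies p (S ω) i ∂P = 0 := by
  rw [integral_comp_eq_sum hS fun s => centeredDummies p s i]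
  simpa [hfib, mul_comm] using congrFun (sum_smul_centeredDummies hp1) i

lemma cov_centeredDummies_comp_eq_dummyGram [IsFiniteMeasure P] (hS : Measurable S)
    (hfib : ∀ s, P.real {ω | S ω = s} = p s) (hp1 : ∑ s, p s = 1) (i j : Fin n) :
    (∫ ω, centeredDummies p (S ω) i * centeredDummies p (S ω) j ∂P)
      - (∫ ω, centeredDummies p (S ω) i ∂P) * (∫ ω, centeredDummies p (S ω) j ∂P)
      = dummyGram p i j := by
  rw [integral_centeredDummies_comp hS hfib hp1, zero_mul, sub_zero,
    integral_comp_eq_sum hS fun s => centeredDummies p s i * centeredDummies p s j]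
  simp [dummyGram, Matrix.sum_apply, vecMulVec_apply, hfib, mul_comm]

lemma cov_centeredDummies_comp_eq_sum_vecMulVec [IsFiniteMeasure P] (hS : Measurable S)
    (hfib : ∀ s, P.real {ω | S ω = s} = p s) (hp1 : ∑ s, p s = 1)
    (hX : ∀ j, Integrable (fun ω => X ω j) P)
    (hmean : ∀ s j, ∫ ω in {ω | S ω = s}, X ω j ∂P = p s * μv s j) (i : Fin n) (j : Fin d) :
    (∫ ω, centeredDummies p (S ω) i * X ω j ∂P)
      - (∫ ω, centeredDummies p (S ω) i ∂P) * (∫ ω, X ω j ∂P)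
      = (∑ s, p s • vecMulVec (centeredDummies p s) (μv s)) i j := by
  rw [integral_centeredDummies_comp hS hfib hp1, zero_mul, sub_zero,
    integral_comp_mul_eq_sum hS (fun s => centeredDummies p s i) (hX j)]
  simp only [hmean, Matrix.sum_apply, Matrix.smul_apply, vecMulVec_apply, smul_eq_mul]
  exact Finset.sum_congr rfl fun s _ => by ring

lemma regression_on_centeredDummies_eq_lastContrasts [IsFiniteMeasure P] (hS : Measurable S)
    (hp : ∀ s, 0 < p s) (hfib : ∀ s, P.real {ω | S ω = s} = p s) (hp1 : ∑ s, p s = 1)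
    (hX : ∀ j, Integrable (fun ω => X ω j) P)
    (hmean : ∀ s j, ∫ ω in {ω | S ω = s}, X ω j ∂P = p s * μv s j)
    {V : Matrix (Fin n) (Fin n) ℝ} {C : Matrix (Fin n) (Fin d) ℝ}
    (hV : ∀ i j, V i j = (∫ ω, centeredDummies p (S ω) i * centeredDummies p (S ω) j ∂P)
      - (∫ ω, centeredDummies p (S ω) i ∂P) * (∫ ω, centeredDummies p (S ω) j ∂P))
    (hC : ∀ i j, C i j = (∫ ω, centeredDummies p (S ω) i * X ω j ∂P)
      - (∫ ω, centeredDummies p (S ω) i ∂P) * (∫ ω, X ω j ∂P)) :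
    V⁻¹ * C = lastContrasts μv := by
  have hV' : V = dummyGram p := Matrix.ext fun i j =>
    (hV i j).trans (cov_centeredDummies_comp_eq_dummyGram hS hfib hp1 i j)
  have hC' : C = ∑ s, p s • vecMulVec (centeredDummies p s) (μv s) := Matrix.ext fun i j =>
    (hC i j).trans (cov_centeredDummies_comp_eq_sum_vecMulVec hS hfib hp1 hX hmean i j)
  rw [hV', hC', inv_dummyGram_mul hp hp1]

lemma memLp_of_integrable_sq_affine [IsFiniteMeasure P] (hS : Measurable S)
    (hint : ∀ (a : ℝ) (b : Fin d → ℝ),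
      Integrable (fun ω => (a + b ⬝ᵥ (X ω - μv (S ω)) - Y ω) ^ 2) P) :
    (∀ j, MemLp (fun ω => X ω j) 2 P) ∧ MemLp Y 2 P := by
  have hL2 : ∀ (a : ℝ) (b : Fin d → ℝ), MemLp (fun ω => a + b ⬝ᵥ (X ω - μv (S ω)) - Y ω) 2 P :=
    fun a b => memLp_two_of_integrable_sq_of_integrable_add_one_sq (hint a b)
      (by convert hint (a + 1) b using 4; ring)
  have hYL : MemLp Y 2 P := (hL2 0 0).neg.ae_eq (Filter.Eventually.of_forall fun ω => by simp)
  refine ⟨fun j => ?_, hYL⟩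
  refine (((hL2 0 (Pi.single j 1)).add hYL).add
    (memLp_comp_of_finite hS (fun s => μv s j) 2)).ae_eq ?_
  exact Filter.Eventually.of_forall fun ω => by simp [single_dotProduct]

lemma memLp_centered [IsFiniteMeasure P] (hS : Measurable S)
    (hX : ∀ j, MemLp (fun ω => X ω j) 2 P) (j : Fin d) :
    MemLp (fun ω => X ω j - μv (S ω) j) 2 P :=
  (hX j).sub (memLp_comp_of_finite hS (fun s => μv s j) 2)

lemma setIntegral_fiber_sub_mean [IsFiniteMeasure P] {s : Fin (n + 1)}
    (hfib : P.real {ω | S ω = s} = p s) {j : Fin d} (hX : Integrable (fun ω => X ω j) P)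
    (hmean : ∫ ω in {ω | S ω = s}, X ω j ∂P = p s * μv s j) :
    ∫ ω in {ω | S ω = s}, (X ω j - μv s j) ∂P = 0 := by
  rw [integral_sub hX.integrableOn (integrable_const _), hmean, setIntegral_const, hfib,
    smul_eq_mul, mul_comm, sub_self]

lemma integral_centered_eq_zero [IsFiniteMeasure P] (hS : Measurable S)
    (hfib : ∀ s, P.real {ω | S ω = s} = p s) (hX : ∀ j, Integrable (fun ω => X ω j) P)
    (hmean : ∀ s j, ∫ ω in {ω | S ω = s}, X ω j ∂P = p s * μv s j) (j : Fin d) :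
    ∫ ω, (X ω j - μv (S ω) j) ∂P = 0 := by
  have hZ : Integrable (fun ω => X ω j - μv (S ω) j) P :=
    (hX j).sub ((memLp_comp_of_finite hS (fun s => μv s j) 1).integrable le_rfl)
  rw [integral_eq_sum_setIntegral_fiber hS hZ]
  refine Finset.sum_eq_zero fun s _ => ?_
  rw [← setIntegral_fiber_sub_mean (hfib s) (hX j) (hmean s j)]
  exact setIntegral_congr_fun (hS (measurableSet_singleton s)) fun ω (hω : S ω = s) => by rw [hω]

lemma setIntegral_fiber_residual_mul [IsFiniteMeasure P] (hS : Measurable S) {s : Fin (n + 1)}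
    (hfib : P.real {ω | S ω = s} = p s) (hX : ∀ j, MemLp (fun ω => X ω j) 2 P)
    (hYL : MemLp Y 2 P) (hY : ∀ ω, Y ω = αb (S ω) + βb (S ω) ⬝ᵥ X ω + ε ω)
    (hmean : ∀ j, ∫ ω in {ω | S ω = s}, X ω j ∂P = p s * μv s j)
    (hcovX : ∀ i j, ∫ ω in {ω | S ω = s}, (X ω i - μv s i) * (X ω j - μv s j) ∂P
      = p s * Sig s i j)
    (hXε : ∀ i, ∫ ω in {ω | S ω = s}, (X ω i - μv s i) * ε ω ∂P = 0)
    (a : ℝ) (b : Fin d → ℝ) (i : Fin d) :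
    ∫ ω in {ω | S ω = s}, (a + b ⬝ᵥ (X ω - μv (S ω)) - Y ω) * (X ω i - μv (S ω) i) ∂P
      = p s * (Sig s *ᵥ (b - βb s)) i := by
  have hms : MeasurableSet {ω | S ω = s} := hS (measurableSet_singleton s)
  have hW : ∀ j, MemLp (fun ω => X ω j - μv s j) 2 (P.restrict {ω | S ω = s}) := fun j =>
    ((hX j).sub (memLp_const _)).restrict _
  have hε : MemLp ε 2 (P.restrict {ω | S ω = s}) := by
    refine (((hYL.sub (memLp_dotProduct hX (βb s))).sub (memLp_const (αb s))).restrict _).ae_eq ?_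
    filter_upwards [ae_restrict_mem hms] with ω (hω : S ω = s)
    simp only [Pi.sub_apply, hY ω, hω]
    ring
  have hpt : ∀ ω ∈ {ω | S ω = s},
      (a + b ⬝ᵥ (X ω - μv (S ω)) - Y ω) * (X ω i - μv (S ω) i)
        = (a - αb s - βb s ⬝ᵥ μv s + (b - βb s) ⬝ᵥ (X ω - μv s) - ε ω) * (X ω i - μv s i) := by
    intro ω (hω : S ω = s)
    simp only [hY ω, hω, sub_dotProduct, dotProduct_sub]
    ring
  rw [setIntegral_congr_fun hms hpt]
  exact integral_affine_sub_mul_eq hW hε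
    (fun j => setIntegral_fiber_sub_mean hfib ((hX j).integrable one_le_two) (hmean j)) hcovX hXε
    _ _ i

lemma integral_residual_mul_centered [IsFiniteMeasure P] (hS : Measurable S)
    (hfib : ∀ s, P.real {ω | S ω = s} = p s) (hX : ∀ j, MemLp (fun ω => X ω j) 2 P)
    (hYL : MemLp Y 2 P) (hY : ∀ ω, Y ω = αb (S ω) + βb (S ω) ⬝ᵥ X ω + ε ω)
    (hmean : ∀ s j, ∫ ω in {ω | S ω = s}, X ω j ∂P = p s * μv s j)
    (hcovX : ∀ s i j, ∫ ω in {ω | S ω = s}, (X ω i - μv s i) * (X ω j - μv s j) ∂P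
      = p s * Sig s i j)
    (hXε : ∀ s i, ∫ ω in {ω | S ω = s}, (X ω i - μv s i) * ε ω ∂P = 0)
    (a : ℝ) (b : Fin d → ℝ) (i : Fin d) :
    ∫ ω, (a + b ⬝ᵥ (X ω - μv (S ω)) - Y ω) * (X ω i - μv (S ω) i) ∂P
      = (∑ s, p s • (Sig s *ᵥ (b - βb s))) i := by
  have hR : MemLp (fun ω => a + b ⬝ᵥ (X ω - μv (S ω)) - Y ω) 2 P :=
    ((memLp_const a).add (memLp_dotProduct (memLp_centered hS hX) b)).sub hYL
  have hRZ : Integrable (fun ω => (a + b ⬝ᵥ (X ω - μv (S ω)) - Y ω) * (X ω i - μv (S ω) i)) P :=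
    hR.integrable_mul (memLp_centered hS hX i)
  rw [integral_eq_sum_setIntegral_fiber hS hRZ]
  simp only [setIntegral_fiber_residual_mul hS (hfib _) hX hYL hY (hmean _) (hcovX _) (hXε _),
    Finset.sum_apply, Pi.smul_apply, smul_eq_mul]

lemma integral_affine_centered [IsProbabilityMeasure P] (hS : Measurable S)
    (hfib : ∀ s, P.real {ω | S ω = s} = p s) (hX : ∀ j, MemLp (fun ω => X ω j) 2 P)
    (hYL : MemLp Y 2 P) (hmean : ∀ s j, ∫ ω in {ω | S ω = s}, X ω j ∂P = p s * μv s j)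
    (a : ℝ) (b : Fin d → ℝ) :
    ∫ ω, (a + b ⬝ᵥ (X ω - μv (S ω)) - Y ω) ∂P = a - ∫ ω, Y ω ∂P := by
  have hZ := memLp_centered hS hX (μv := μv)
  have hbZ : ∫ ω, b ⬝ᵥ (X ω - μv (S ω)) ∂P = 0 := by
    simp only [dotProduct, Pi.sub_apply]
    rw [integral_finsetSum _ fun j _ => ((hZ j).integrable one_le_two).const_mul (b j)]
    simp [integral_const_mul, integral_centered_eq_zero hS hfib
      (fun j => (hX j).integrable one_le_two) hmean]
  have hbZint : Integrable (fun ω => b ⬝ᵥ (X ω - μv (S ω))) P :=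
    (memLp_dotProduct hZ b).integrable one_le_two
  have haffine : Integrable (fun ω => a + b ⬝ᵥ (X ω - μv (S ω))) P :=
    (integrable_const a).add hbZint
  rw [integral_sub haffine (hYL.integrable one_le_two), integral_add (integrable_const a) hbZint,
    hbZ]
  simp

end Model

theorem stmt7_general
    {Ω : Type*} [MeasurableSpace Ω] (P : Measure Ω) [IsProbabilityMeasure P]
    (n d : ℕ) (S : Ω → Fin (n + 1)) (hS : Measurable S)
    (X : Ω → Fin d → ℝ) (Y : Ω → ℝ) (ε : Ω → ℝ)
    (p : Fin (n + 1) → ℝ) (μv : Fin (n + 1) → Fin d → ℝ)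
    (Sig : Fin (n + 1) → Matrix (Fin d) (Fin d) ℝ)
    (αb : Fin (n + 1) → ℝ) (βb : Fin (n + 1) → Fin d → ℝ)
    (hp : ∀ s, 0 < p s)
    (hmeas : ∀ s, P {ω | S ω = s} = ENNReal.ofReal (p s))
    (hmean : ∀ s i, ∫ ω in {ω | S ω = s}, X ω i ∂P = p s * μv s i)
    (hcovX : ∀ s i j,
      ∫ ω in {ω | S ω = s}, (X ω i - μv s i) * (X ω j - μv s j) ∂P = p s * Sig s i j)
    (hSigPD : ∀ s, (Sig s).PosDef)
    (hY : ∀ ω, Y ω = αb (S ω) + βb (S ω) ⬝ᵥ X ω + ε ω)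
    (hXε : ∀ s i, ∫ ω in {ω | S ω = s}, (X ω i - μv s i) * ε ω ∂P = 0)
    (μbar : Fin d → ℝ) (hμbar : μbar = ∑ s, p s • μv s)
    -- centered bank dummies, as deterministic functions of the bank label
    (Uq : Fin n → Fin (n + 1) → ℝ)
    (hUq : ∀ i s, Uq i s = (if s = i.castSucc then 1 else 0) - p i.castSucc)
    (U : Fin n → Ω → ℝ) (hU : ∀ i ω, U i ω = Uq i (S ω))
    -- M = var[U(S)]⁻¹ cov[U(S), X_S]
    (VarU : Matrix (Fin n) (Fin n) ℝ)
    (hVarU : ∀ i j, VarU i j =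
      (∫ ω, U i ω * U j ω ∂P) - (∫ ω, U i ω ∂P) * (∫ ω, U j ω ∂P))
    (covUX : Matrix (Fin n) (Fin d) ℝ)
    (hcovUX : ∀ i j, covUX i j =
      (∫ ω, U i ω * X ω j ∂P) - (∫ ω, U i ω ∂P) * (∫ ω, X ω j ∂P))
    (M : Matrix (Fin n) (Fin d) ℝ) (hM : M = VarU⁻¹ * covUX)
    -- FEO coefficient and intercept
    (βF : Fin d → ℝ)
    (hβF : βF = (∑ s, p s • Sig s)⁻¹ *ᵥ (∑ s, p s • (Sig s *ᵥ βb s)))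
    (αF : ℝ) (hαF : αF = (∫ ω, Y ω ∂P) - βF ⬝ᵥ μbar)
    (hint : ∀ (a : ℝ) (b : Fin d → ℝ),
      Integrable (fun ω => (a + b ⬝ᵥ (X ω - μv (S ω)) - Y ω) ^ 2) P) :
    (∀ s : Fin (n + 1), Mᵀ *ᵥ (fun i => Uq i s) = μv s - μbar) ∧
    (∀ (s : Fin (n + 1)) (x : Fin d → ℝ),
      αF + βF ⬝ᵥ (x - Mᵀ *ᵥ (fun i => Uq i s)) = αF + βF ⬝ᵥ (x - μv s + μbar)) ∧
    (∀ (a : ℝ) (b : Fin d → ℝ),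
      ∫ ω, (αF + βF ⬝ᵥ (X ω - Mᵀ *ᵥ (fun i => Uq i (S ω))) - Y ω) ^ 2 ∂P
        ≤ ∫ ω, (a + b ⬝ᵥ (X ω - μv (S ω)) - Y ω) ^ 2 ∂P) := by
  have hUq' : ∀ i s, Uq i s = centeredDummies p s i := hUq
  simp only [hU, hUq'] at hVarU hcovUX ⊢
  have hfib : ∀ s, P.real {ω | S ω = s} = p s := fun s => by
    rw [measureReal_def, hmeas, ENNReal.toReal_ofReal (hp s).le]
  have hp1 : ∑ s, p s = 1 := by
    simpa [hfib] using (integral_comp_eq_sum (P := P) hS fun _ => (1 : ℝ)).symm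
  obtain ⟨hX, hYL⟩ := memLp_of_integrable_sq_affine hS hint
  have hMU : ∀ s, Mᵀ *ᵥ centeredDummies p s = μv s - μbar := fun s => by
    rw [hM, regression_on_centeredDummies_eq_lastContrasts hS hp hfib hp1
      (fun j => (hX j).integrable one_le_two) hmean hVarU hcovUX, hμbar]
    exact lastContrasts_transpose_mulVec hp1 μv s
  have hSEO : ∀ ω, αF + βF ⬝ᵥ (X ω - Mᵀ *ᵥ centeredDummies p (S ω)) - Y ω
      = (∫ ω, Y ω ∂P) + βF ⬝ᵥ (X ω - μv (S ω)) - Y ω := fun ω => by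
    rw [hMU, hαF, dotProduct_sub, dotProduct_sub, dotProduct_sub]
    ring
  refine ⟨hMU, fun s x => by rw [hMU, sub_add], fun a b => ?_⟩
  simp only [hSEO]
  refine integral_sq_le_of_orthogonal (Z := fun ω => X ω - μv (S ω)) hYL (memLp_centered hS hX)
    ?_ (fun i => ?_) a b
  · rw [integral_affine_centered hS hfib hX hYL hmean, sub_self]
  · refine (integral_residual_mul_centered hS hfib hX hYL hY hmean hcovX hXε _ βF i).trans ?_
    rw [hβF, sum_smul_mulVec_sub_eq_zero hp hSigPD, Pi.zero_apply]

/-- With `M = var[U(S)]⁻¹ cov[U(S), X_S]`, one has `MᵀU(s) = μ_s − μ̄` for every bank `s`;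
hence the SEO forecast `Ŷ_SEO(x,s) = α_F + β_Fᵀ(x − MᵀU(s))` equals
`α_F + β_Fᵀ(x − μ_s + μ̄)`, and `Ŷ_SEO(X_S, S)` is the linear projection of `Y_S` onto the
span of a constant and `X_S − μ_S`. -/
theorem stmt7
    {Ω : Type*} [MeasurableSpace Ω] (P : Measure Ω) [IsProbabilityMeasure P]
    (n d : ℕ) (S : Ω → Fin (n + 1)) (hS : Measurable S)
    (X : Ω → Fin d → ℝ) (Y : Ω → ℝ) (ε : Ω → ℝ)
    (p : Fin (n + 1) → ℝ) (μv : Fin (n + 1) → Fin d → ℝ)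
    (Sig : Fin (n + 1) → Matrix (Fin d) (Fin d) ℝ)
    (αb : Fin (n + 1) → ℝ) (βb : Fin (n + 1) → Fin d → ℝ)
    (hp : ∀ s, 0 < p s)
    (hmeas : ∀ s, P {ω | S ω = s} = ENNReal.ofReal (p s))
    (hmean : ∀ s i, ∫ ω in {ω | S ω = s}, X ω i ∂P = p s * μv s i)
    (hcovX : ∀ s i j,
      ∫ ω in {ω | S ω = s}, (X ω i - μv s i) * (X ω j - μv s j) ∂P = p s * Sig s i j)
    (hSigPD : ∀ s, (Sig s).PosDef)
    (hY : ∀ ω, Y ω = αb (S ω) + βb (S ω) ⬝ᵥ X ω + ε ω)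
    (hε : ∀ s, ∫ ω in {ω | S ω = s}, ε ω ∂P = 0)
    (hXε : ∀ s i, ∫ ω in {ω | S ω = s}, (X ω i - μv s i) * ε ω ∂P = 0)
    (μbar : Fin d → ℝ) (hμbar : μbar = ∑ s, p s • μv s)
    -- centered bank dummies, as deterministic functions of the bank label
    (Uq : Fin n → Fin (n + 1) → ℝ)
    (hUq : ∀ i s, Uq i s = (if s = i.castSucc then 1 else 0) - p i.castSucc)
    (U : Fin n → Ω → ℝ) (hU : ∀ i ω, U i ω = Uq i (S ω))
    -- M = var[U(S)]⁻¹ cov[U(S), X_S]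
    (VarU : Matrix (Fin n) (Fin n) ℝ)
    (hVarU : ∀ i j, VarU i j =
      (∫ ω, U i ω * U j ω ∂P) - (∫ ω, U i ω ∂P) * (∫ ω, U j ω ∂P))
    (covUX : Matrix (Fin n) (Fin d) ℝ)
    (hcovUX : ∀ i j, covUX i j =
      (∫ ω, U i ω * X ω j ∂P) - (∫ ω, U i ω ∂P) * (∫ ω, X ω j ∂P))
    (M : Matrix (Fin n) (Fin d) ℝ) (hM : M = VarU⁻¹ * covUX)
    -- FEO coefficient and intercept
    (βF : Fin d → ℝ)
    (hβF : βF = (∑ s, p s • Sig s)⁻¹ *ᵥ (∑ s, p s • (Sig s *ᵥ βb s)))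
    (αF : ℝ) (hαF : αF = (∫ ω, Y ω ∂P) - βF ⬝ᵥ μbar)
    (hint : ∀ (a : ℝ) (b : Fin d → ℝ),
      Integrable (fun ω => (a + b ⬝ᵥ (X ω - μv (S ω)) - Y ω) ^ 2) P) :
    (∀ s : Fin (n + 1), Mᵀ *ᵥ (fun i => Uq i s) = μv s - μbar) ∧
    (∀ (s : Fin (n + 1)) (x : Fin d → ℝ),
      αF + βF ⬝ᵥ (x - Mᵀ *ᵥ (fun i => Uq i s)) = αF + βF ⬝ᵥ (x - μv s + μbar)) ∧
    (∀ (a : ℝ) (b : Fin d → ℝ),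
      ∫ ω, (αF + βF ⬝ᵥ (X ω - Mᵀ *ᵥ (fun i => Uq i (S ω))) - Y ω) ^ 2 ∂P
        ≤ ∫ ω, (a + b ⬝ᵥ (X ω - μv (S ω)) - Y ω) ^ 2 ∂P) :=
  stmt7_general P n d S hS X Y ε p μv Sig αb βb hp hmeas hmean hcovX hSigPD hY hXε μbar hμbar Uq hUq
    U hU VarU hVarU covUX hcovUX M hM βF hβF αF hαF hint
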